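/- arXiv:1703.01356 — 4 statements merged into one kernel-verified Lean document; each statement's English description precedes it below -/
import Mathlib

section
/- If a labelled sequent R,E,X ⊢ Y is a labelled tree sequent with equality (LTSE) and R is nonempty, then the result of adding a new edge Rxz where x occurs in R and z is a fresh variable not occurring in the sequent, together with any labelled formulae and equality terms labelled only by variables of the new relation multiset, is again an LTSE. -/
/-- The nodes of the directed graph defined by a relation multiset. -/
def InNodes {V : Type} (R : Multiset (V × V)) (v : V) : Prop :=
  ∃ w, (v, w) ∈ R ∨ (w, v) ∈ R

/-- The underlying undirected graph of the directed graph defined by `R`. -/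
def undirGraph {V : Type} (R : Multiset (V × V)) : SimpleGraph V where
  Adj x y := x ≠ y ∧ ((x, y) ∈ R ∨ (y, x) ∈ R)
  symm := by
    constructor
    intro x y h
    exact ⟨h.1.symm, h.2.symm⟩
  loopless := by
    constructor
    intro x h
    exact h.1 rfl

/-- `R` is treelike: rooted, irreflexive, and undirected-acyclic. -/
def Treelike {V : Type} (R : Multiset (V × V)) : Prop :=
  (∃ r, InNodes R r ∧ ∀ v, InNodes R v → Relation.ReflTransGen (fun a b => (a, b) ∈ R) r v) ∧
  (∀ x, (x, x) ∉ R) ∧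
  (undirGraph R).IsAcyclic

/-- A state variable occurs in the equality mset `E` or in the labelled formula
multisets `X`, `Y` of a labelled sequent. -/
def OccursSeq {V F : Type} (E : Multiset (V × V)) (X Y : Multiset (V × F)) (v : V) : Prop :=
  (∃ A, (v, A) ∈ X) ∨ (∃ A, (v, A) ∈ Y) ∨ (∃ w, (v, w) ∈ E ∨ (w, v) ∈ E)

/-- The labelled sequent `R, E, X ⊢ Y` is a labelled tree sequent with equality (LTSE):
if `R` is nonempty then `R` is treelike and every state variable of `X`, `Y`, `E`
occurs in `R`; if `R` is empty then all labels of `X`, `Y`, `E` coincide. -/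
def IsLTSE {V F : Type} (R E : Multiset (V × V)) (X Y : Multiset (V × F)) : Prop :=
  (R ≠ 0 → Treelike R ∧ ∀ v, OccursSeq E X Y v → InNodes R v) ∧
  (R = 0 → ∀ u v, OccursSeq E X Y u → OccursSeq E X Y v → u = v)

/-! The new edge `Rxz` hangs the fresh node `z` below `x`: the root of `R` still reaches
every node (through `x` for `z`), `x ≠ z` keeps the relation irreflexive, and since `z` is
isolated in the old graph it is not reachable from `x`, so the new undirected edge closes no
cycle. Every label of the enlarged sequent lies in `R` or, by assumption, in the new relation. -/

open SimpleGraph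

section LabelledTree

variable {V F : Type}

theorem InNodes.cons {R : Multiset (V × V)} {v : V} (p : V × V) (hv : InNodes R v) :
    InNodes (p ::ₘ R) v :=
  let ⟨w, hw⟩ := hv
  ⟨w, hw.imp Multiset.mem_cons_of_mem Multiset.mem_cons_of_mem⟩

theorem inNodes_cons_iff {R : Multiset (V × V)} {a b v : V} :
    InNodes ((a, b) ::ₘ R) v ↔ v = a ∨ v = b ∨ InNodes R v := by
  simp only [InNodes, Multiset.mem_cons, Prod.mk.injEq]
  grind

theorem InNodes.of_undirGraph_adj {R : Multiset (V × V)} {v w : V}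
    (h : (undirGraph R).Adj v w) : InNodes R v :=
  ⟨w, h.2.imp id id⟩

theorem undirGraph_cons (p : V × V) (R : Multiset (V × V)) :
    undirGraph (p ::ₘ R) = undirGraph R ⊔ edge p.1 p.2 := by
  ext v w
  simp only [undirGraph, sup_adj, edge_adj, Multiset.mem_cons, Prod.ext_iff]
  grind

theorem not_reachable_of_not_inNodes {R : Multiset (V × V)} {x z : V} (hxz : x ≠ z)
    (hz : ¬ InNodes R z) : ¬ (undirGraph R).Reachable x z := by
  rintro ⟨p⟩
  obtain ⟨w, hadj, -, -⟩ := p.reverse.exists_eq_cons_of_ne hxz.symm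
  exact hz (.of_undirGraph_adj hadj)

theorem Treelike.cons_fresh_leaf {R : Multiset (V × V)} {x z : V} (hT : Treelike R)
    (hx : InNodes R x) (hz : ¬ InNodes R z) : Treelike ((x, z) ::ₘ R) := by
  obtain ⟨⟨r, hr, hreach⟩, hirrefl, hacyc⟩ := hT
  have hxz : x ≠ z := fun h => hz (h ▸ hx)
  have hreach' : ∀ v, InNodes R v →
      Relation.ReflTransGen (fun a b => (a, b) ∈ (x, z) ::ₘ R) r v := fun v hv =>
    Relation.ReflTransGen.mono (fun _ _ => Multiset.mem_cons_of_mem) _ _ (hreach v hv)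
  refine ⟨⟨r, hr.cons _, fun v hv => ?_⟩, fun v hv => ?_, ?_⟩
  · rcases inNodes_cons_iff.1 hv with rfl | rfl | hv
    · exact hreach' v hx
    · exact (hreach' x hx).tail (Multiset.mem_cons_self _ _)
    · exact hreach' v hv
  · rcases Multiset.mem_cons.1 hv with h | h
    · obtain ⟨rfl, rfl⟩ := Prod.ext_iff.1 h
      exact hxz rfl
    · exact hirrefl v h
  · rw [undirGraph_cons]
    exact hacyc.sup_edge_of_not_reachable (not_reachable_of_not_inNodes hxz hz)

theorem occursSeq_add_iff {E E' : Multiset (V × V)} {X X' Y Y' : Multiset (V × F)} {v : V} :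
    OccursSeq (E + E') (X + X') (Y + Y') v ↔ OccursSeq E X Y v ∨ OccursSeq E' X' Y' v := by
  simp only [OccursSeq, Multiset.mem_add]
  grind

end LabelledTree

theorem LTSE_add_fresh_leaf_general {V F : Type} (R E : Multiset (V × V)) (X Y : Multiset (V × F))
    (h : IsLTSE R E X Y) (hR : R ≠ 0) (x z : V)
    (hx : InNodes R x) (hz₁ : ¬ InNodes R z)
    (E' : Multiset (V × V)) (X' Y' : Multiset (V × F))
    (hnew : ∀ v, OccursSeq E' X' Y' v → InNodes ((x, z) ::ₘ R) v) :
    IsLTSE ((x, z) ::ₘ R) (E + E') (X + X') (Y + Y') := by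
  obtain ⟨hT, hocc⟩ := h.1 hR
  refine ⟨fun _ => ⟨hT.cons_fresh_leaf hx hz₁, fun v hv => ?_⟩,
    fun h0 => absurd h0 Multiset.cons_ne_zero⟩
  rcases occursSeq_add_iff.1 hv with hv | hv
  · exact (hocc v hv).cons _
  · exact hnew v hv

/-- Adding to an LTSE with nonempty `R` a fresh leaf edge `Rxz` (with `x` occurring in `R`
and `z` fresh), together with any labelled formulae and equality terms labelled only by
variables of the new relation multiset, yields again an LTSE. -/
theorem LTSE_add_fresh_leaf {V F : Type} (R E : Multiset (V × V)) (X Y : Multiset (V × F))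
    (h : IsLTSE R E X Y) (hR : R ≠ 0) (x z : V)
    (hx : InNodes R x) (hz₁ : ¬ InNodes R z) (hz₂ : ¬ OccursSeq E X Y z)
    (E' : Multiset (V × V)) (X' Y' : Multiset (V × F))
    (hnew : ∀ v, OccursSeq E' X' Y' v → InNodes ((x, z) ::ₘ R) v) :
    IsLTSE ((x, z) ::ₘ R) (E + E') (X + X') (Y + Y') :=
  LTSE_add_fresh_leaf_general R E X Y h hR x z hx hz₁ E' X' Y' hnew
end

section
/- The substitution operation on labelled sequents is well-behaved with respect to LTSE: if R,E,X ⊢ Y is an LTSE with Rxy, Rxz ∈ R, y ≠ z, and y=z a term that may be removed, then substituting z for y throughout and deleting the edge Rxy yields a relation multiset that is again treelike, provided y is a leaf of the tree defined by R. -/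
/-- The substitution replacing every occurrence of `y` by `z`. -/
def substVar {V : Type} [DecidableEq V] (z y : V) : V → V :=
  fun v => if v = y then z else v

/-
A leaf `y` of a treelike `R` has exactly one parent: two parents `a ≠ b` are both reachable
from the root without passing through `y`, and the walk `a ~ root ~ b — y` would make the
edge `a — y` a non-bridge of the acyclic graph. Hence the only edge of `R` into `y` is
`x → y`, which the substitution sends to the existing edge `x → z`. So every edge of the new
multiset is an edge of `R` (irreflexivity and acyclicity are inherited), while every edge of
`R` has its image in the new multiset (the root, which is not `y`, still reaches every node).
-/

open SimpleGraph Relation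

variable {V : Type}

theorem eq_of_reflTransGen_of_leaf {R : Multiset (V × V)} {y c : V}
    (hleaf : ∀ w, (y, w) ∉ R) (h : ReflTransGen (fun a b => (a, b) ∈ R) y c) : c = y :=
  (h.cases_head.resolve_right fun ⟨w, hw, _⟩ => hleaf w hw).symm

theorem undirGraph_mono {R S : Multiset (V × V)} (h : S ⊆ R) : undirGraph S ≤ undirGraph R :=
  fun _ _ ⟨hne, hab⟩ => ⟨hne, hab.imp (@h _) (@h _)⟩

theorem undirGraph_adj_of_mem {R : Multiset (V × V)} (hirr : ∀ x, (x, x) ∉ R) {a b : V}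
    (h : (a, b) ∈ R) : (undirGraph R).Adj a b :=
  ⟨fun hab => hirr a (hab ▸ h), Or.inl h⟩

theorem rooted_of_forall_mem_map {R S : Multiset (V × V)} (f : V → V) {r : V}
    (hr : InNodes R r) (hreach : ∀ v, InNodes R v → ReflTransGen (fun a b => (a, b) ∈ R) r v)
    (hmaps : ∀ p ∈ R, Prod.map f f p ∈ S) (hcover : S ⊆ R.map (Prod.map f f)) :
    InNodes S (f r) ∧ ∀ v, InNodes S v → ReflTransGen (fun a b => (a, b) ∈ S) (f r) v := by
  have hlift (v : V) (hv : InNodes R v) : ReflTransGen (fun a b => (a, b) ∈ S) (f r) (f v) :=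
    (hreach v hv).lift f fun a b => hmaps (a, b)
  refine ⟨?_, ?_⟩
  · obtain ⟨w, hw | hw⟩ := hr
    exacts [⟨f w, Or.inl (hmaps _ hw)⟩, ⟨f w, Or.inr (hmaps _ hw)⟩]
  · rintro v ⟨w, hw | hw⟩ <;> obtain ⟨⟨a, b⟩, hab, he⟩ := Multiset.mem_map.1 (hcover hw) <;>
      simp only [Prod.map, Prod.mk.injEq] at he
    · exact he.1 ▸ hlift a ⟨b, Or.inl hab⟩
    · exact he.2 ▸ hlift b ⟨a, Or.inr hab⟩

theorem reachable_deleteIncidenceSet_of_reflTransGen {R : Multiset (V × V)} {y r c : V}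
    (hirr : ∀ x, (x, x) ∉ R) (hleaf : ∀ w, (y, w) ∉ R)
    (h : ReflTransGen (fun a b => (a, b) ∈ R) r c) (hc : c ≠ y) :
    ((undirGraph R).deleteIncidenceSet y).Reachable r c := by
  induction h with
  | refl => rfl
  | @tail b c _ hbc ih =>
    have hb : b ≠ y := by rintro rfl; exact hleaf c hbc
    exact (ih hb).trans
      (Adj.reachable (deleteIncidenceSet_adj.2 ⟨undirGraph_adj_of_mem hirr hbc, hb, hc⟩))

theorem Treelike.eq_of_mem_of_mem_of_leaf {R : Multiset (V × V)} (h : Treelike R) {y a b : V}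
    (hleaf : ∀ w, (y, w) ∉ R) (ha : (a, y) ∈ R) (hb : (b, y) ∈ R) : a = b := by
  obtain ⟨⟨r, -, hr⟩, hirr, hacyc⟩ := h
  by_contra hab
  set G := undirGraph R
  have hay : a ≠ y := fun e => hirr a (e ▸ ha)
  have hby : b ≠ y := fun e => hirr b (e ▸ hb)
  have hab' : (G.deleteIncidenceSet y).Reachable a b :=
    (reachable_deleteIncidenceSet_of_reflTransGen hirr hleaf (hr a ⟨y, Or.inl ha⟩) hay).symm.trans
      (reachable_deleteIncidenceSet_of_reflTransGen hirr hleaf (hr b ⟨y, Or.inl hb⟩) hby)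
  have hle : G.deleteIncidenceSet y ≤ G.deleteEdges {s(a, y)} := fun u v huv => by
    obtain ⟨huv, hu, hv⟩ := deleteIncidenceSet_adj.1 huv
    exact deleteEdges_adj.2 ⟨huv, by simp [hu, hv]⟩
  have hby' : (G.deleteEdges {s(a, y)}).Adj b y :=
    deleteEdges_adj.2 ⟨undirGraph_adj_of_mem hirr hb, by simp [Ne.symm hab, hby]⟩
  exact isBridge_iff.1 (isAcyclic_iff_forall_adj_isBridge.1 hacyc (undirGraph_adj_of_mem hirr ha))
    ((hab'.mono hle).trans hby'.reachable)

section substVar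

variable [DecidableEq V] {R : Multiset (V × V)} {x y z : V}

@[simp]
theorem substVar_self : substVar z y y = z := if_pos rfl

theorem substVar_of_ne {v : V} (hv : v ≠ y) : substVar z y v = v := if_neg hv

theorem Treelike.map_substVar_subset (h : Treelike R) (hleaf : ∀ w, (y, w) ∉ R)
    (hxy : (x, y) ∈ R) (hxz : (x, z) ∈ R) :
    R.map (Prod.map (substVar z y) (substVar z y)) ⊆ R := by
  intro p hp
  obtain ⟨⟨a, b⟩, hab, rfl⟩ := Multiset.mem_map.1 hp
  have ha : a ≠ y := by rintro rfl; exact hleaf b hab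
  by_cases hb : b = y
  · subst hb
    obtain rfl := h.eq_of_mem_of_mem_of_leaf hleaf hab hxy
    simpa [substVar_of_ne ha] using hxz
  · simpa [substVar_of_ne ha, substVar_of_ne hb] using hab

theorem mem_map_substVar_erase (hirr : ∀ x, (x, x) ∉ R) (hxz : (x, z) ∈ R) (hyz : y ≠ z)
    {p : V × V} (hp : p ∈ R) :
    Prod.map (substVar z y) (substVar z y) p ∈
      (R.erase (x, y)).map (Prod.map (substVar z y) (substVar z y)) := by
  by_cases he : p = (x, y)
  · subst he
    have hx : x ≠ y := fun e => hirr x (e ▸ hp)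
    have hxz' : (x, z) ∈ R.erase (x, y) :=
      (Multiset.mem_erase_of_ne (by simp [Ne.symm hyz])).2 hxz
    simpa [substVar_of_ne hx, substVar_of_ne (Ne.symm hyz)] using
      Multiset.mem_map_of_mem (Prod.map (substVar z y) (substVar z y)) hxz'
  · exact Multiset.mem_map_of_mem _ ((Multiset.mem_erase_of_ne he).2 hp)

end substVar

/-- If `R` is treelike with `Rxy, Rxz ∈ R`, `y ≠ z`, and `y` is a leaf of the tree
defined by `R` (no outgoing edge), then deleting the edge `Rxy` and substituting
`z` for `y` throughout yields a relation multiset that is again treelike. -/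
theorem treelike_subst_leaf {V : Type} [DecidableEq V] (R : Multiset (V × V))
    (x y z : V) (h : Treelike R)
    (hxy : (x, y) ∈ R) (hxz : (x, z) ∈ R) (hyz : y ≠ z)
    (hleaf : ∀ w, (y, w) ∉ R) :
    Treelike ((R.erase (x, y)).map (Prod.map (substVar z y) (substVar z y))) := by
  obtain ⟨⟨r, hrR, hr⟩, hirr, hacyc⟩ := id h
  have hcover : (R.erase (x, y)).map (Prod.map (substVar z y) (substVar z y)) ⊆
      R.map (Prod.map (substVar z y) (substVar z y)) :=
    Multiset.map_subset_map (Multiset.erase_subset _ _)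
  have hsub := Multiset.Subset.trans hcover (h.map_substVar_subset hleaf hxy hxz)
  have hry : r ≠ y := fun e =>
    hirr x (eq_of_reflTransGen_of_leaf hleaf (e ▸ hr x ⟨y, Or.inl hxy⟩) ▸ hxy)
  have hroot := rooted_of_forall_mem_map (substVar z y) hrR hr
    (fun _ => mem_map_substVar_erase hirr hxz hyz) hcover
  rw [substVar_of_ne hry] at hroot
  exact ⟨⟨r, hroot⟩, fun v hv => hirr v (hsub hv), hacyc.anti (undirGraph_mono hsub)⟩
end

section
/- The map from indexed nested sequents to labelled tree sequents with equality is injective up to renaming of state variables: two indexed nested sequents mapping to the same LTSE (up to a bijective renaming of state variables and index renaming) are equal up to renaming of indices. -/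
/-- A labelled sequent `R, E, X ⊢ Y` over state variables `List ℕ` and formulas `F`:
a relation multiset `R`, an equality multiset `E`, and labelled formula multisets
`X` (antecedent) and `Y` (succedent). -/
structure LTSE (F : Type) where
  R : Multiset (List ℕ × List ℕ)
  E : Multiset (List ℕ × List ℕ)
  X : Multiset (List ℕ × F)
  Y : Multiset (List ℕ × F)

/-- An indexed nested sequent: a finite tree (of positions, closed under parents,
containing the root `[]`), each of whose nodes is decorated with a traditional
sequent `ant p ⊢ suc p` of formula multisets and a natural-number index `idx p`. -/
structure INS (F : Type) where
  pos : Finset (List ℕ)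
  root_mem : ([] : List ℕ) ∈ pos
  down : ∀ (p : List ℕ) (k : ℕ), p ++ [k] ∈ pos → p ∈ pos
  ant : List ℕ → Multiset F
  suc : List ℕ → Multiset F
  idx : List ℕ → ℕ

/-- The translation of an indexed nested sequent into a labelled tree sequent with
equality: `R` encodes the tree edges (each non-root position with its parent),
`E` contains `u = v` for every pair of distinct positions carrying the same index,
and the formulae of each node are labelled by that node's position. -/
def toLTSE {F : Type} (s : INS F) : LTSE F where
  R := ((s.pos.filter (fun p => p ≠ [])).val).map (fun p => (p.dropLast, p))
  E := (((s.pos ×ˢ s.pos).filter (fun q => q.1 ≠ q.2 ∧ s.idx q.1 = s.idx q.2)).val)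
  X := s.pos.val.bind (fun p => (s.ant p).map (fun A => (p, A)))
  Y := s.pos.val.bind (fun p => (s.suc p).map (fun A => (p, A)))

/-- Two labelled sequents are the same LTSE up to a bijective renaming `π` of state
variables: `π` preserves the relation terms, the consequences of the equality mset
(in the theory of equality), and the labelled formula multisets. -/
def LTSE.Equiv {F : Type} (a b : LTSE F) : Prop :=
  ∃ π : List ℕ ≃ List ℕ,
    (∀ u v, (u, v) ∈ a.R ↔ (π u, π v) ∈ b.R) ∧
    (∀ u v, Relation.EqvGen (fun p q => (p, q) ∈ a.E) u v ↔
      Relation.EqvGen (fun p q => (p, q) ∈ b.E) (π u) (π v)) ∧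
    a.X.map (fun q => (π q.1, q.2)) = b.X ∧
    a.Y.map (fun q => (π q.1, q.2)) = b.Y

/-- Two indexed nested sequents are equal up to renaming of indices (and up to the
tree isomorphism `φ` relating their underlying decorated trees): the decorations
correspond, and the indices correspond under an injective renaming `g`. -/
def INS.EqUpToIndices {F : Type} (s t : INS F) : Prop :=
  ∃ (φ : List ℕ ≃ List ℕ) (g : ℕ → ℕ),
    Function.Injective g ∧
    t.pos = s.pos.image φ ∧
    (∀ p ∈ s.pos, p ≠ [] → φ p ≠ [] ∧ (φ p).dropLast = φ p.dropLast) ∧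
    φ [] = [] ∧
    (∀ p ∈ s.pos, t.ant (φ p) = s.ant p) ∧
    (∀ p ∈ s.pos, t.suc (φ p) = s.suc p) ∧
    (∀ p ∈ s.pos, t.idx (φ p) = g (s.idx p))

/-!
A renaming `π` of state variables that preserves the edge relation `R` in both directions sends
non-root nodes of `s` to non-root nodes of `t`, commuting with taking the parent. As soon as `s`
has an edge, the root has a child, and its image is then a node of `t` that is nobody's child,
i.e. the root; so `π` restricts to a tree isomorphism. Counting the formulas carrying a given
label recovers the sequent at each node. The equational closure of `E` relates two nodes exactly
when they carry the same index, so the two index functions have the same kernel along `π`, and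
the induced map on the finitely many indices of `s` extends to an injective renaming of `ℕ`.
-/

theorem Multiset.count_bind_map_pair {α β : Type*} [DecidableEq α] [DecidableEq β]
    (S : Finset α) (f : α → Multiset β) (a : α) (b : β) :
    (S.val.bind fun p => (f p).map fun B => (p, B)).count (a, b) =
      if a ∈ S then (f a).count b else 0 := by
  rw [Multiset.count_bind, Finset.sum_map_val, ← Finset.sum_ite_eq S a fun p => (f p).count b]
  refine Finset.sum_congr rfl fun p _ => ?_
  split_ifs with hap
  · subst hap
    exact Multiset.count_map_eq_count' _ _ (Prod.mk_right_injective a) b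
  · exact Multiset.count_eq_zero.2 (by simp [Ne.symm hap])

theorem Multiset.map_snd_bind_map_pair {α β : Type*} (S : Finset α) (f : α → Multiset β) :
    (S.val.bind fun p => (f p).map fun B => (p, B)).map Prod.snd = ∑ p ∈ S, f p := by
  simp only [Multiset.map_bind, Multiset.map_map, Function.comp_def, Multiset.map_id']
  rfl

theorem Multiset.eq_of_map_bind_map_pair {α β γ : Type*} {e : α → γ} (he : e.Injective)
    {S : Finset α} {T : Finset γ} {f : α → Multiset β} {g : γ → Multiset β}
    (h : (S.val.bind fun p => (f p).map fun B => (p, B)).map (fun q => (e q.1, q.2)) =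
      T.val.bind fun p => (g p).map fun B => (p, B))
    {p : α} (hp : p ∈ S) (hep : e p ∈ T) : g (e p) = f p := by
  classical
  ext B
  have hcount := congrArg (Multiset.count (e p, B)) h
  have hinj : Function.Injective fun q : α × β => (e q.1, q.2) :=
    he.prodMap Function.injective_id
  rwa [Multiset.count_map_eq_count' _ _ hinj (p, B),
    Multiset.count_bind_map_pair, Multiset.count_bind_map_pair, if_pos hp, if_pos hep,
    eq_comm] at hcount

theorem Multiset.sum_eq_of_map_bind_map_pair {α β γ : Type*} {e : α → γ}
    {S : Finset α} {T : Finset γ} {f : α → Multiset β} {g : γ → Multiset β}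
    (h : (S.val.bind fun p => (f p).map fun B => (p, B)).map (fun q => (e q.1, q.2)) =
      T.val.bind fun p => (g p).map fun B => (p, B)) :
    ∑ q ∈ T, g q = ∑ p ∈ S, f p := by
  rw [← Multiset.map_snd_bind_map_pair, ← h, Multiset.map_map, ← Multiset.map_snd_bind_map_pair]
  rfl

theorem exists_injective_comp_eq_of_eq_iff {ι : Type*} (S : Finset ι) (a b : ι → ℕ)
    (h : ∀ p ∈ S, ∀ q ∈ S, b p = b q ↔ a p = a q) :
    ∃ g : ℕ → ℕ, g.Injective ∧ ∀ p ∈ S, g (a p) = b p := by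
  classical
  -- outside `a '' S`, shift past every value of `b` on `S`
  let N := S.sup b + 1
  have hlt : ∀ p ∈ S, b p < N := fun p hp => Nat.lt_succ_of_le (Finset.le_sup hp)
  let g : ℕ → ℕ := fun i => if hi : ∃ p ∈ S, a p = i then b hi.choose else N + i
  have hg : ∀ p ∈ S, g (a p) = b p := fun p hp => by
    have hi : ∃ q ∈ S, a q = a p := ⟨p, hp, rfl⟩
    simp only [g, dif_pos hi]
    exact (h _ hi.choose_spec.1 p hp).2 hi.choose_spec.2
  refine ⟨g, fun i j hij => ?_, hg⟩
  by_cases hi : ∃ p ∈ S, a p = i <;> by_cases hj : ∃ p ∈ S, a p = j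
  · obtain ⟨p, hp, rfl⟩ := hi
    obtain ⟨q, hq, rfl⟩ := hj
    rwa [hg p hp, hg q hq, h p hp q hq] at hij
  · obtain ⟨p, hp, rfl⟩ := hi
    simp only [g, dif_neg hj, hg p hp] at hij
    have := hlt p hp
    omega
  · obtain ⟨q, hq, rfl⟩ := hj
    simp only [g, dif_neg hi, hg q hq] at hij
    have := hlt q hq
    omega
  · simpa only [g, dif_neg hi, dif_neg hj, Nat.add_left_cancel_iff] using hij

namespace INS

variable {F : Type} (s : INS F)

theorem mem_of_append_mem {p q : List ℕ} (h : p ++ q ∈ s.pos) : p ∈ s.pos := by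
  induction q using List.reverseRecOn with
  | nil => simpa using h
  | append_singleton q k ih => exact ih (s.down _ k (by simpa only [List.append_assoc] using h))

theorem dropLast_mem {p : List ℕ} (h : p ∈ s.pos) : p.dropLast ∈ s.pos := by
  rcases eq_or_ne p [] with rfl | hp
  · exact h
  · exact s.mem_of_append_mem (by rwa [List.dropLast_append_getLast hp])

theorem exists_singleton_mem (h : s.pos ≠ {[]}) : ∃ k, [k] ∈ s.pos := by
  obtain ⟨p, hp, hne⟩ : ∃ p ∈ s.pos, p ≠ [] := by
    by_contra! hall
    exact h (Finset.eq_singleton_iff_unique_mem.2 ⟨s.root_mem, hall⟩)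
  obtain ⟨k, q, rfl⟩ := List.exists_cons_of_ne_nil hne
  exact ⟨k, s.mem_of_append_mem (q := q) hp⟩

end INS

section toLTSE

variable {F : Type} (s : INS F)

theorem mem_toLTSE_R_iff (u v : List ℕ) :
    (u, v) ∈ (toLTSE s).R ↔ v ∈ s.pos ∧ v ≠ [] ∧ u = v.dropLast := by
  simp only [toLTSE, Multiset.mem_map, Finset.mem_val, Finset.mem_filter, Prod.mk.injEq]
  constructor
  · rintro ⟨p, ⟨hp, hpne⟩, rfl, rfl⟩
    exact ⟨hp, hpne, rfl⟩
  · rintro ⟨hv, hvne, rfl⟩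
    exact ⟨v, ⟨hv, hvne⟩, rfl, rfl⟩

theorem eqvGen_toLTSE_E_iff (u v : List ℕ) :
    Relation.EqvGen (fun p q => (p, q) ∈ (toLTSE s).E) u v ↔
      u = v ∨ u ∈ s.pos ∧ v ∈ s.pos ∧ s.idx u = s.idx v := by
  have hequiv : Equivalence fun u v => u = v ∨ u ∈ s.pos ∧ v ∈ s.pos ∧ s.idx u = s.idx v :=
    { refl := fun _ => Or.inl rfl
      symm := by
        rintro u v (rfl | ⟨hu, hv, huv⟩)
        exacts [Or.inl rfl, Or.inr ⟨hv, hu, huv.symm⟩]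
      trans := by
        rintro u v w (rfl | ⟨hu, hv, huv⟩) hvw
        · exact hvw
        · rcases hvw with rfl | ⟨-, hw, hvw⟩
          exacts [Or.inr ⟨hu, hv, huv⟩, Or.inr ⟨hu, hw, huv.trans hvw⟩] }
  have hE : ∀ u v, (u, v) ∈ (toLTSE s).E ↔ u ∈ s.pos ∧ v ∈ s.pos ∧ u ≠ v ∧ s.idx u = s.idx v := by
    simp [toLTSE, and_assoc]
  constructor
  · intro h
    refine hequiv.eqvGen_iff.1 (Relation.EqvGen.mono (fun u v huv => Or.inr ?_) u v h)
    obtain ⟨hu, hv, -, huv⟩ := (hE u v).1 huv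
    exact ⟨hu, hv, huv⟩
  · rintro (rfl | ⟨hu, hv, huv⟩)
    · exact .refl u
    · rcases eq_or_ne u v with rfl | hne
      · exact .refl u
      · exact .rel _ _ ((hE u v).2 ⟨hu, hv, hne, huv⟩)

end toLTSE

section Renaming

variable {F : Type} {s t : INS F} {π : List ℕ ≃ List ℕ}

theorem idx_map_eq_iff_of_eqvGen_iff
    (hE : ∀ u v, Relation.EqvGen (fun p q => (p, q) ∈ (toLTSE s).E) u v ↔
      Relation.EqvGen (fun p q => (p, q) ∈ (toLTSE t).E) (π u) (π v))
    (hmem : ∀ p ∈ s.pos, π p ∈ t.pos) {p q : List ℕ} (hp : p ∈ s.pos) (hq : q ∈ s.pos) :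
    t.idx (π p) = t.idx (π q) ↔ s.idx p = s.idx q := by
  have hpq := hE p q
  simp only [eqvGen_toLTSE_E_iff, hp, hq, hmem p hp, hmem q hq, π.apply_eq_iff_eq,
    true_and] at hpq
  rcases eq_or_ne p q with rfl | hne
  · simp
  · simpa [hne] using hpq.symm

theorem map_mem_pos_of_ne_nil
    (hR : ∀ u v, (u, v) ∈ (toLTSE s).R ↔ (π u, π v) ∈ (toLTSE t).R)
    {v : List ℕ} (hv : v ∈ s.pos) (hne : v ≠ []) :
    π v ∈ t.pos ∧ π v ≠ [] ∧ (π v).dropLast = π v.dropLast := by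
  obtain ⟨hπv, hπne, hdrop⟩ := (mem_toLTSE_R_iff t _ _).1 ((hR _ _).1
    ((mem_toLTSE_R_iff s _ _).2 ⟨hv, hne, rfl⟩))
  exact ⟨hπv, hπne, hdrop.symm⟩

theorem symm_mem_pos_of_ne_nil
    (hR : ∀ u v, (u, v) ∈ (toLTSE s).R ↔ (π u, π v) ∈ (toLTSE t).R)
    {w : List ℕ} (hw : w ∈ t.pos) (hne : w ≠ []) :
    π.symm w ∈ s.pos ∧ π.symm w ≠ [] := by
  have hedge : (π (π.symm w.dropLast), π (π.symm w)) ∈ (toLTSE t).R := by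
    simpa using (mem_toLTSE_R_iff t _ _).2 ⟨hw, hne, rfl⟩
  obtain ⟨hv, hvne, -⟩ := (mem_toLTSE_R_iff s _ _).1 ((hR _ _).2 hedge)
  exact ⟨hv, hvne⟩

theorem map_nil_of_singleton_mem
    (hR : ∀ u v, (u, v) ∈ (toLTSE s).R ↔ (π u, π v) ∈ (toLTSE t).R)
    {k : ℕ} (hk : [k] ∈ s.pos) : π [] = [] := by
  obtain ⟨hπk, hπne, hdrop⟩ := map_mem_pos_of_ne_nil hR hk (List.cons_ne_nil k [])
  have hroot : π [] ∈ t.pos := by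
    simpa [hdrop] using t.dropLast_mem hπk
  by_contra hne
  simpa using (symm_mem_pos_of_ne_nil hR hroot hne).2

theorem map_mem_pos_iff
    (hR : ∀ u v, (u, v) ∈ (toLTSE s).R ↔ (π u, π v) ∈ (toLTSE t).R)
    (h0 : π [] = []) (v : List ℕ) : π v ∈ t.pos ↔ v ∈ s.pos := by
  rcases eq_or_ne v [] with rfl | hne
  · simp [h0, s.root_mem, t.root_mem]
  · refine ⟨fun hv => ?_, fun hv => (map_mem_pos_of_ne_nil hR hv hne).1⟩
    simpa using (symm_mem_pos_of_ne_nil hR hv fun h => hne (π.injective (h.trans h0.symm))).1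

theorem pos_eq_image_of_map_nil
    (hR : ∀ u v, (u, v) ∈ (toLTSE s).R ↔ (π u, π v) ∈ (toLTSE t).R)
    (h0 : π [] = []) : t.pos = s.pos.image π := by
  ext w
  rw [Finset.mem_image]
  refine ⟨fun hw => ⟨π.symm w, ?_, π.apply_symm_apply w⟩, ?_⟩
  · rwa [← map_mem_pos_iff hR h0, π.apply_symm_apply]
  · rintro ⟨v, hv, rfl⟩
    exact (map_mem_pos_iff hR h0 v).2 hv

theorem pos_eq_singleton_of_map_nil_ne
    (hR : ∀ u v, (u, v) ∈ (toLTSE s).R ↔ (π u, π v) ∈ (toLTSE t).R)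
    (h0 : π [] ≠ []) : s.pos = {[]} ∧ t.pos = {[]} := by
  have hs : s.pos = {[]} := by
    by_contra hs
    obtain ⟨k, hk⟩ := s.exists_singleton_mem hs
    exact h0 (map_nil_of_singleton_mem hR hk)
  refine ⟨hs, Finset.eq_singleton_iff_unique_mem.2 ⟨t.root_mem, fun w hw => ?_⟩⟩
  by_contra hne
  obtain ⟨hv, hvne⟩ := symm_mem_pos_of_ne_nil hR hw hne
  exact hvne (Finset.mem_singleton.1 (hs ▸ hv))

end Renaming

theorem INS.eqUpToIndices_of_idx_eq_iff {F : Type} {s t : INS F} (φ : List ℕ ≃ List ℕ)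
    (hpos : t.pos = s.pos.image φ)
    (hedge : ∀ p ∈ s.pos, p ≠ [] → φ p ≠ [] ∧ (φ p).dropLast = φ p.dropLast)
    (hroot : φ [] = []) (hant : ∀ p ∈ s.pos, t.ant (φ p) = s.ant p)
    (hsuc : ∀ p ∈ s.pos, t.suc (φ p) = s.suc p)
    (hidx : ∀ p ∈ s.pos, ∀ q ∈ s.pos, t.idx (φ p) = t.idx (φ q) ↔ s.idx p = s.idx q) :
    s.EqUpToIndices t := by
  obtain ⟨g, hg, hgidx⟩ := exists_injective_comp_eq_of_eq_iff s.pos s.idx (t.idx ∘ φ) hidx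
  exact ⟨φ, g, hg, hpos, hedge, hroot, hant, hsuc, fun p hp => (hgidx p hp).symm⟩

/-- The map from indexed nested sequents to labelled tree sequents with equality is
injective up to renaming of state variables: two INS mapping to the same LTSE up to a
bijective renaming of state variables are equal up to renaming of indices. -/
theorem toLTSE_injective_up_to_renaming {F : Type} (s t : INS F)
    (h : LTSE.Equiv (toLTSE s) (toLTSE t)) :
    INS.EqUpToIndices s t := by
  obtain ⟨π, hR, hE, hX, hY⟩ := h
  by_cases h0 : π [] = []
  · have hmem : ∀ p ∈ s.pos, π p ∈ t.pos := fun p => (map_mem_pos_iff hR h0 p).2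
    exact INS.eqUpToIndices_of_idx_eq_iff π (pos_eq_image_of_map_nil hR h0)
      (fun p hp hne => (map_mem_pos_of_ne_nil hR hp hne).2) h0
      (fun p hp => Multiset.eq_of_map_bind_map_pair π.injective hX hp (hmem p hp))
      (fun p hp => Multiset.eq_of_map_bind_map_pair π.injective hY hp (hmem p hp))
      (fun p hp q hq => idx_map_eq_iff_of_eqvGen_iff hE hmem hp hq)
  · -- with no edges, `π` need not fix the root; the identity renaming works instead
    obtain ⟨hs, ht⟩ := pos_eq_singleton_of_map_nil_ne hR h0
    refine INS.eqUpToIndices_of_idx_eq_iff (Equiv.refl _) (by simp [hs, ht]) (by simp [hs]) rfl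
      ?_ ?_ (by simp [hs])
    · simpa [hs, ht] using Multiset.sum_eq_of_map_bind_map_pair hX
    · simpa [hs, ht] using Multiset.sum_eq_of_map_bind_map_pair hY
end

section
/- Let Ω be a finite set of formulas. Any 2-reduced lrDAG satisfying the separation property (S), of height at most N, with node labels being multisets over Ω in which no formula occurs more than twice, has a number of nodes bounded by a function of N and |Ω| only. -/
/-!
Acyclicity makes reachability a partial order and (S) says that the elements below any node
form a chain, so the graph above a node `v` is the subtree `Ici v` of a tree order. Edges are
recovered from the order and the set of heights of each node's parents (`edge_iff`). A subtree
is described up to isomorphism by its code: the label and parent heights of its root together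
with the multiset of codes of the subtrees above the root's upper covers. Two sibling subtrees
with the same code are isomorphic, and exchanging them is an automorphism preserving labels and
edges and fixing everything else, so in a 2-reduced graph every code occurs at most twice among
the upper covers of a node. By induction on coheight, the number of codes of subtrees of
coheight at most `h`, and the size of these subtrees, are bounded in terms of `h`, `N` and `|Ω|`.
-/

open Set Order Function

lemma Finset.exists_bijOn_of_map_eq {α β : Type*} (f : α → β) {s t : Finset α}
    (h : s.val.map f = t.val.map f) : ∃ g : α → α, BijOn g s t ∧ ∀ a ∈ s, f (g a) = f a := by
  classical
  have hcard b : Fintype.card {a : s // f a = b} = Fintype.card {a : t // f a = b} := by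
    have := congrArg (Multiset.count b) h
    simp only [Multiset.count_map] at this
    simp only [Fintype.card_subtype, Finset.univ_eq_attach, Finset.filter_attach (fun a => f a = b),
      Finset.card_map, Finset.card_attach]
    simpa [Finset.card_def, eq_comm] using this
  let e : s ≃ t := Equiv.ofFiberEquiv fun b => Fintype.equivOfCardEq (hcard b)
  have he (a) (ha : a ∈ s) : f (e ⟨a, ha⟩) = f a :=
    Equiv.ofFiberEquiv_map (fun b => Fintype.equivOfCardEq (hcard b)) ⟨a, ha⟩
  refine ⟨fun a => if ha : a ∈ s then e ⟨a, ha⟩ else a,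
    ⟨fun a ha => ?_, fun a ha a' ha' hea => ?_, fun b hb => ?_⟩, fun a ha => ?_⟩
  · rw [Finset.mem_coe] at ha
    simp [ha]
  · rw [Finset.mem_coe] at ha ha'
    simpa [ha, ha', Subtype.val_inj] using hea
  · obtain ⟨⟨a, ha⟩, hab⟩ := e.surjective ⟨b, hb⟩
    exact ⟨a, ha, by simp [ha, hab]⟩
  · simpa [ha] using he a ha

namespace LrDAG

variable {P α : Type*} [PartialOrder P] {a b c c' d e v w x : P}

def IsTreeOrder (P : Type*) [PartialOrder P] : Prop :=
  ∀ v : P, IsChain (· ≤ ·) (Iic v)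

lemma covBy_eq_of_le (htree : IsTreeOrder P) (hd : c ⋖ d) (he : c ⋖ e)
    (hdv : d ≤ v) (hev : e ≤ v) : d = e := by
  rcases (htree v).total hdv hev with hde | hed
  · exact (he.eq_or_eq hd.le hde).resolve_left hd.lt.ne'
  · exact ((hd.eq_or_eq he.le hed).resolve_left he.lt.ne').symm

lemma le_of_covBy_of_not_le (htree : IsTreeOrder P) (hxc : x ⋖ c)
    (hca : ¬ c ≤ a) (hab : a ≤ b) (hcb : c ≤ b) : a ≤ x := by
  have hac : a < c := ((htree b).total hab hcb).resolve_right hca |>.lt_of_not_ge hca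
  rcases (htree c).total hac.le hxc.le with hax | hxa
  · exact hax
  · rcases hxa.eq_or_lt with rfl | hxa
    · exact le_rfl
    · exact absurd hac (hxc.2 hxa)

lemma eq_or_exists_covBy_le [Finite P] (hcv : c ≤ v) : v = c ∨ ∃ d, c ⋖ d ∧ d ≤ v := by
  have := IsStronglyAtomic.of_wellFounded_lt (α := P) wellFounded_lt
  rcases hcv.eq_or_lt with rfl | hlt
  · exact Or.inl rfl
  · exact Or.inr (exists_covBy_le_of_lt hlt)

lemma coheight_le_of_lt {h : ℕ} (hcd : c < d) (hc : coheight c ≤ h + 1) : coheight d ≤ h := by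
  have := (coheight_add_one_le hcd).trans hc
  exact (ENat.add_le_add_iff_right ENat.one_ne_top).1 this

lemma not_lt_of_coheight_le_zero (hc : coheight c ≤ 0) : ¬ c < d := fun hcd => by
  simpa using (coheight_add_one_le hcd).trans hc

lemma height_lt_top [Fintype P] (a : P) : height a < ⊤ :=
  (height_le_iff.2 fun p _ => ENat.natCast_le_natCast.2 p.length_lt_card.le).trans_lt
    (ENat.natCast_lt_top _)

lemma eq_of_le_of_height_eq [Fintype P] (hab : a ≤ b) (h : height a = height b) : a = b := by
  by_contra hne
  have := height_add_one_le (hab.lt_of_ne hne)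
  rw [h] at this
  exact ((ENat.add_one_le_iff (height_lt_top b).ne).1 this).false

/-- Codes of level `h` describe subtrees cut off at height `h`, so they are faithful only on
subtrees of coheight at most `h`; indexing by the level keeps the set of codes finite. -/
def Code (α : Type*) : ℕ → Type _
  | 0 => α
  | h + 1 => α × Multiset (Code α h)

open scoped Classical in
noncomputable def covers [Fintype P] (v : P) : Finset P := Finset.univ.filter (v ⋖ ·)

@[simp] lemma mem_covers [Fintype P] : d ∈ covers c ↔ c ⋖ d := by
  simp [covers]

@[simp] lemma coe_covers [Fintype P] : (covers c : Set P) = {d | c ⋖ d} := by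
  ext; simp

noncomputable def code [Fintype P] (data : P → α) : (h : ℕ) → P → Code α h
  | 0, v => data v
  | h + 1, v => (data v, (covers v).val.map (code data h))

structure IsIciIso (data : P → α) (φ : P → P) (c c' : P) : Prop where
  mapsTo : MapsTo φ (Ici c) (Ici c')
  surjOn : SurjOn φ (Ici c) (Ici c')
  data_eq : ∀ v ∈ Ici c, data (φ v) = data v
  le_iff : ∀ v ∈ Ici c, ∀ w ∈ Ici c, φ v ≤ φ w ↔ v ≤ w

namespace IsIciIso

variable {data : P → α} {φ : P → P}

lemma injOn (hφ : IsIciIso data φ c c') : InjOn φ (Ici c) := fun v hv w hw hvw =>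
  le_antisymm ((hφ.le_iff v hv w hw).1 hvw.le) ((hφ.le_iff w hw v hv).1 hvw.ge)

lemma bijOn (hφ : IsIciIso data φ c c') : BijOn φ (Ici c) (Ici c') :=
  ⟨hφ.mapsTo, hφ.injOn, hφ.surjOn⟩

lemma exists_symm (hφ : IsIciIso data φ c c') :
    ∃ ψ, IsIciIso data ψ c' c ∧ InvOn ψ φ (Ici c) (Ici c') := by
  have : Nonempty P := ⟨c⟩
  have hinv := hφ.bijOn.invOn_invFunOn
  have hψ := hφ.bijOn.symm hinv.symm
  refine ⟨_, ⟨hψ.mapsTo, hψ.surjOn, fun w hw => ?_, fun w hw w' hw' => ?_⟩, hinv⟩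
  · rw [← hφ.data_eq _ (hψ.mapsTo hw), hinv.2 hw]
  · rw [← hφ.le_iff _ (hψ.mapsTo hw) _ (hψ.mapsTo hw'), hinv.2 hw, hinv.2 hw']

end IsIciIso

open scoped Classical in
noncomputable def glue (c' : P) (φ : P → P → P) (c v : P) : P :=
  if h : ∃ d, c ⋖ d ∧ d ≤ v then φ h.choose v else c'

lemma glue_self (φ : P → P → P) : glue c' φ c c = c' :=
  dif_neg fun ⟨_, hd, hdc⟩ => hd.lt.not_ge hdc

lemma glue_of_covBy (htree : IsTreeOrder P) (φ : P → P → P) (hd : c ⋖ d)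
    (hdv : d ≤ v) : glue c' φ c v = φ d v := by
  have h : ∃ d, c ⋖ d ∧ d ≤ v := ⟨d, hd, hdv⟩
  rw [glue, dif_pos h, covBy_eq_of_le htree h.choose_spec.1 hd h.choose_spec.2 hdv]

lemma isIciIso_glue [Finite P] (htree : IsTreeOrder P) {data : P → α}
    (hdata : data c = data c') {g : P → P} (hg : BijOn g {d | c ⋖ d} {d | c' ⋖ d})
    {φ : P → P → P} (hφ : ∀ d, c ⋖ d → IsIciIso data (φ d) d (g d)) :
    IsIciIso data (glue c' φ c) c c' := by
  have hgle {d v} (hd : c ⋖ d) (hdv : d ≤ v) : g d ≤ glue c' φ c v := by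
    rw [glue_of_covBy htree φ hd hdv]; exact (hφ d hd).mapsTo hdv
  have hmaps : MapsTo (glue c' φ c) (Ici c) (Ici c') := fun v hv => by
    rcases eq_or_exists_covBy_le hv with rfl | ⟨d, hd, hdv⟩
    · exact (glue_self φ).ge
    · exact (hg.mapsTo hd).le.trans (hgle hd hdv)
  refine ⟨hmaps, fun w hw => ?_, fun v hv => ?_, fun v hv w hw => ?_⟩
  · rcases eq_or_exists_covBy_le hw with rfl | ⟨d', hd', hdw⟩
    · exact ⟨c, le_rfl, glue_self φ⟩
    obtain ⟨d, hd, rfl⟩ := hg.surjOn hd'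
    obtain ⟨v, hv, rfl⟩ := (hφ d hd).surjOn hdw
    exact ⟨v, hd.le.trans hv, glue_of_covBy htree φ hd hv⟩
  · rcases eq_or_exists_covBy_le hv with rfl | ⟨d, hd, hdv⟩
    · rw [glue_self, hdata]
    · rw [glue_of_covBy htree φ hd hdv]; exact (hφ d hd).data_eq v hdv
  rcases eq_or_exists_covBy_le hv with rfl | ⟨d, hd, hdv⟩
  · rw [glue_self]
    exact iff_of_true (hmaps hw) hw
  rcases eq_or_exists_covBy_le hw with rfl | ⟨e, he, hew⟩
  · rw [glue_self]
    exact iff_of_false (fun h => (hg.mapsTo hd).lt.not_ge ((hgle hd hdv).trans h))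
      fun h => hd.lt.not_ge (hdv.trans h)
  rw [glue_of_covBy htree φ hd hdv, glue_of_covBy htree φ he hew]
  obtain rfl | hde := eq_or_ne d e
  · exact (hφ d hd).le_iff v hdv w hew
  refine iff_of_false (fun h => hde (hg.injOn hd he ?_)) fun h => hde ?_
  · exact covBy_eq_of_le htree (hg.mapsTo hd) (hg.mapsTo he)
      (((hφ d hd).mapsTo hdv).trans h) ((hφ e he).mapsTo hew)
  · exact covBy_eq_of_le htree hd he (hdv.trans h) hew

lemma exists_isIciIso_of_code_eq [Fintype P] (htree : IsTreeOrder P)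
    {data : P → α} : ∀ (h : ℕ) {c c' : P}, coheight c ≤ h → coheight c' ≤ h →
      code data h c = code data h c' → ∃ φ, IsIciIso data φ c c'
  | 0, c, c', hc, hc', hcode => by
    have hnone {x : P} (hx : coheight x ≤ (0 : ℕ)) : {d | x ⋖ d} = ∅ :=
      eq_empty_of_forall_notMem fun _ hd => not_lt_of_coheight_le_zero hx hd.lt
    refine ⟨_, isIciIso_glue htree hcode (g := id) (φ := fun _ => id) ?_ fun d hd => ?_⟩
    · rw [hnone hc, hnone hc']
      exact bijOn_empty id
    · exact absurd hd.lt (not_lt_of_coheight_le_zero hc)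
  | h + 1, c, c', hc, hc', hcode => by
    obtain ⟨hdata, hmap⟩ := Prod.mk.inj hcode
    obtain ⟨g, hg, hgcode⟩ := Finset.exists_bijOn_of_map_eq _ hmap
    simp only [coe_covers] at hg
    have hφ (d) : ∃ φ, c ⋖ d → IsIciIso data φ d (g d) := by
      by_cases hd : c ⋖ d
      · obtain ⟨φ, hφ⟩ := exists_isIciIso_of_code_eq htree h (coheight_le_of_lt hd.lt hc)
          (coheight_le_of_lt (hg.mapsTo hd).lt hc') (hgcode d (mem_covers.2 hd)).symm
        exact ⟨φ, fun _ => hφ⟩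
      · exact ⟨id, fun h => absurd h hd⟩
    choose φ hφ using hφ
    exact ⟨_, isIciIso_glue htree hdata hg hφ⟩

lemma map_le_map_of_mem_Ici (htree : IsTreeOrder P) {data : P → α}
    {φ σ : P → P} (hxc : x ⋖ c) (hxc' : x ⋖ c') (hφ : IsIciIso data φ c c')
    (hσ : EqOn σ φ (Ici c)) (hfix : ∀ v, ¬ c ≤ v → ¬ c' ≤ v → σ v = v)
    (hcb : c ≤ b) (hab : a ≤ b) : σ a ≤ σ b := by
  by_cases hca : c ≤ a
  · rw [hσ hca, hσ hcb]
    exact (hφ.le_iff a hca b hcb).2 hab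
  have hax := le_of_covBy_of_not_le htree hxc hca hab hcb
  rw [hfix a hca fun h => hxc'.lt.not_ge (h.trans hax), hσ hcb]
  exact hax.trans (hxc'.le.trans (hφ.mapsTo hcb))

lemma exists_orderIso_swap (htree : IsTreeOrder P) {data : P → α}
    {φ : P → P} {c₀ c₁ : P} (hx₀ : x ⋖ c₀) (hx₁ : x ⋖ c₁) (hne : c₀ ≠ c₁)
    (hφ : IsIciIso data φ c₀ c₁) :
    ∃ π : P ≃o P, (∀ v, data (π v) = data v) ∧ (∀ v, ¬ c₀ ≤ v → ¬ c₁ ≤ v → π v = v) ∧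
      π c₀ ≠ c₀ := by
  obtain ⟨ψ, hψ, hinv⟩ := hφ.exists_symm
  have hdisj {v} (h₀ : c₀ ≤ v) : ¬ c₁ ≤ v := fun h₁ => hne (covBy_eq_of_le htree hx₀ hx₁ h₀ h₁)
  classical
  let σ v := if c₀ ≤ v then φ v else if c₁ ≤ v then ψ v else v
  have hσ₀ : EqOn σ φ (Ici c₀) := fun v hv => if_pos hv
  have hσ₁ : EqOn σ ψ (Ici c₁) := fun v hv => (if_neg fun h => hdisj h hv).trans (if_pos hv)
  have hfix (v) (h₀ : ¬ c₀ ≤ v) (h₁ : ¬ c₁ ≤ v) : σ v = v := (if_neg h₀).trans (if_neg h₁)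
  have hσ : Involutive σ := fun v => by
    by_cases h₀ : c₀ ≤ v
    · rw [hσ₀ h₀, hσ₁ (hφ.mapsTo h₀), hinv.1 h₀]
    by_cases h₁ : c₁ ≤ v
    · rw [hσ₁ h₁, hσ₀ (hψ.mapsTo h₁), hinv.2 h₁]
    rw [hfix v h₀ h₁, hfix v h₀ h₁]
  have hmono : Monotone σ := fun a b hab => by
    by_cases h₀ : c₀ ≤ b
    · exact map_le_map_of_mem_Ici htree hx₀ hx₁ hφ hσ₀ hfix h₀ hab
    by_cases h₁ : c₁ ≤ b
    · exact map_le_map_of_mem_Ici htree hx₁ hx₀ hψ hσ₁ (fun v h₁ h₀ => hfix v h₀ h₁) h₁ hab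
    rw [hfix b h₀ h₁, hfix a (fun h => h₀ (h.trans hab)) fun h => h₁ (h.trans hab)]
    exact hab
  refine ⟨hσ.toPerm.toOrderIso hmono (by rwa [Involutive.toPerm_symm]), fun v => ?_,
    fun v h₀ h₁ => hfix v h₀ h₁, fun h => hdisj le_rfl ?_⟩
  · by_cases h₀ : c₀ ≤ v
    · exact (congrArg data (hσ₀ h₀)).trans (hφ.data_eq v h₀)
    by_cases h₁ : c₁ ≤ v
    · exact (congrArg data (hσ₁ h₁)).trans (hψ.data_eq v h₁)
    exact congrArg data (hfix v h₀ h₁)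
  · have hc₁ : c₁ ≤ σ c₀ := by
      rw [hσ₀ (le_refl c₀)]
      exact hφ.mapsTo (le_refl c₀)
    exact h ▸ hc₁

def twoMultisets [DecidableEq α] (s : Finset α) : Finset (Multiset α) :=
  (s.val + s.val).powerset.toFinset

lemma mem_twoMultisets [DecidableEq α] {s : Finset α} {m : Multiset α} (hm : ∀ a ∈ m, a ∈ s)
    (hc : ∀ a, m.count a ≤ 2) : m ∈ twoMultisets s := by
  rw [twoMultisets, Multiset.mem_toFinset, Multiset.mem_powerset, Multiset.le_iff_count]
  intro a
  by_cases ha : a ∈ s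
  · rw [Multiset.count_add, Multiset.count_eq_one_of_mem s.nodup ha]
    exact hc a
  · rw [Multiset.count_eq_zero.2 fun h => ha (hm a h)]
    exact Nat.zero_le _

lemma card_le_of_mem_twoMultisets [DecidableEq α] {s : Finset α} {m : Multiset α}
    (hm : m ∈ twoMultisets s) : Multiset.card m ≤ 2 * s.card := by
  rw [twoMultisets, Multiset.mem_toFinset, Multiset.mem_powerset] at hm
  simpa [two_mul] using Multiset.card_le_card hm

lemma card_twoMultisets_le [DecidableEq α] (s : Finset α) : (twoMultisets s).card ≤ 4 ^ s.card :=
  (Multiset.toFinset_card_le _).trans <| by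
    rw [Multiset.card_powerset, Multiset.card_add, ← two_mul, pow_mul]
    norm_num

open scoped Classical in
noncomputable def codeSet (A : Finset α) : (h : ℕ) → Finset (Code α h)
  | 0 => A
  | h + 1 => A ×ˢ twoMultisets (codeSet A h)

def codeBound (k : ℕ) : ℕ → ℕ
  | 0 => k
  | h + 1 => k * 4 ^ codeBound k h

open scoped Classical in
lemma card_codeSet_le {A : Finset α} {k : ℕ} (hA : A.card ≤ k) :
    ∀ h, (codeSet A h).card ≤ codeBound k h
  | 0 => hA
  | h + 1 => (Finset.card_product _ _).trans_le <| Nat.mul_le_mul hA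
      ((card_twoMultisets_le _).trans (Nat.pow_le_pow_right (by norm_num) (card_codeSet_le hA h)))

def sizeBound (k : ℕ) : ℕ → ℕ
  | 0 => 1
  | h + 1 => 1 + 2 * codeBound k h * sizeBound k h

section Finite

variable [Fintype P] {data : P → α} {A : Finset α} {k : ℕ}

open scoped Classical in
def CoverCodesAtMostTwice (data : P → α) : Prop :=
  ∀ (h : ℕ) (x : P), coheight x ≤ h + 1 → ∀ k, ((covers x).val.map (code data h)).count k ≤ 2

open scoped Classical in
lemma code_mem_codeSet (hA : ∀ v, data v ∈ A) (hmult : CoverCodesAtMostTwice data) :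
    ∀ (h : ℕ) v, coheight v ≤ h → code data h v ∈ codeSet A h
  | 0, v, _ => hA v
  | h + 1, v, hv => by
    refine Finset.mem_product.2 ⟨hA v, mem_twoMultisets (fun k hk => ?_) (hmult h v hv)⟩
    obtain ⟨d, hd, rfl⟩ := Multiset.mem_map.1 hk
    exact code_mem_codeSet hA hmult h d (coheight_le_of_lt (mem_covers.1 hd).lt hv)

open scoped Classical in
lemma card_covers_le (hA : ∀ v, data v ∈ A) (hAk : A.card ≤ k)
    (hmult : CoverCodesAtMostTwice data) {h : ℕ} (hv : coheight v ≤ h + 1) :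
    (covers v).card ≤ 2 * codeBound k h := by
  have hmem : _ ∈ A ×ˢ _ := code_mem_codeSet hA hmult (h + 1) v hv
  calc (covers v).card = Multiset.card ((covers v).val.map (code data h)) := by simp
    _ ≤ 2 * (codeSet A h).card := card_le_of_mem_twoMultisets (Finset.mem_product.1 hmem).2
    _ ≤ 2 * codeBound k h := Nat.mul_le_mul_left 2 (card_codeSet_le hAk h)

open scoped Classical in
lemma card_filter_le_sizeBound (hA : ∀ v, data v ∈ A) (hAk : A.card ≤ k)
    (hmult : CoverCodesAtMostTwice data) :
    ∀ (h : ℕ) (v : P), coheight v ≤ h → (Finset.univ.filter (v ≤ ·)).card ≤ sizeBound k h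
  | 0, v, hv => Finset.card_le_one.2 fun a ha b hb => by
    simp only [Finset.mem_filter, Finset.mem_univ, true_and] at ha hb
    have hmax {w} (hw : v ≤ w) : w = v :=
      (hw.eq_or_lt.resolve_right (not_lt_of_coheight_le_zero hv)).symm
    rw [hmax ha, hmax hb]
  | h + 1, v, hv => by
    have hsub : Finset.univ.filter (v ≤ ·) ⊆
        insert v ((covers v).biUnion fun d => Finset.univ.filter (d ≤ ·)) := fun w hw => by
      simp only [Finset.mem_filter, Finset.mem_univ, true_and] at hw
      rcases eq_or_exists_covBy_le hw with rfl | ⟨d, hd, hdw⟩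
      · exact Finset.mem_insert_self _ _
      · exact Finset.mem_insert_of_mem (Finset.mem_biUnion.2 ⟨d, by simpa using hd, by simpa⟩)
    calc (Finset.univ.filter (v ≤ ·)).card
        ≤ 1 + ∑ d ∈ covers v, (Finset.univ.filter (d ≤ ·)).card :=
          (Finset.card_le_card hsub).trans <| (Finset.card_insert_le _ _).trans <| by
            rw [add_comm]; exact Nat.add_le_add_left Finset.card_biUnion_le 1
      _ ≤ 1 + (covers v).card * sizeBound k h := by
          rw [← smul_eq_mul]
          gcongr
          refine Finset.sum_le_card_nsmul _ _ _ fun d hd => ?_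
          exact card_filter_le_sizeBound hA hAk hmult h d
            (coheight_le_of_lt (mem_covers.1 hd).lt hv)
      _ ≤ sizeBound k (h + 1) := by
          rw [sizeBound]; gcongr; exact card_covers_le hA hAk hmult hv

end Finite

section Edges

variable [Fintype P] {β : Type*} {E : P → P → Prop}

open scoped Classical in
/-- Parents are remembered by their heights, which order isomorphisms preserve. -/
noncomputable def parentHeights (E : P → P → Prop) (v : P) : Finset ℕ∞ :=
  (Finset.univ.filter (E · v)).image height

lemma edge_iff (htree : IsTreeOrder P) (hlt : ∀ a b, E a b → a < b) :
    E a b ↔ a < b ∧ height a ∈ parentHeights E b := by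
  refine ⟨fun h => ⟨hlt a b h, Finset.mem_image.2 ⟨a, by simpa using h, rfl⟩⟩, ?_⟩
  rintro ⟨hab, ha⟩
  obtain ⟨a', ha', hh⟩ := Finset.mem_image.1 ha
  replace ha' : E a' b := by simpa using ha'
  rcases (htree b).total (hlt _ _ ha').le hab.le with h | h
  · rwa [← eq_of_le_of_height_eq h hh]
  · rwa [eq_of_le_of_height_eq h hh.symm]

lemma edge_map_iff (htree : IsTreeOrder P) (hlt : ∀ a b, E a b → a < b)
    (π : P ≃o P) (hπ : ∀ v, parentHeights E (π v) = parentHeights E v) :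
    E (π a) (π b) ↔ E a b := by
  rw [edge_iff htree hlt, edge_iff htree hlt, π.lt_iff_lt, height_orderIso, hπ]

lemma parentHeights_subset {N : ℕ} (hN : ∀ p : LTSeries P, p.length ≤ N) (v : P) :
    parentHeights E v ⊆ (Finset.range (N + 1)).image (↑) := fun n hn => by
  obtain ⟨a, -, rfl⟩ := Finset.mem_image.1 hn
  have ha : height a ≤ N := height_le_iff.2 fun p _ => by exact_mod_cast hN p
  refine Finset.mem_image.2 ⟨(height a).toNat, ?_, ENat.natCast_toNat (height_lt_top a).ne⟩
  exact Finset.mem_range_succ_iff.2 (ENat.toNat_le_of_le_natCast ha)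

noncomputable def nodeData (E : P → P → Prop) (label : P → β) (v : P) : β × Finset ℕ∞ :=
  (label v, parentHeights E v)

def IsTwoReduced (E : P → P → Prop) (label : P → β) : Prop :=
  ∀ (x : P) (c : Fin 3 → P), (∀ i, E x (c i)) → Injective c →
    ∀ π : P ≃ P, (∀ a b, E a b ↔ E (π a) (π b)) → (∀ v, label (π v) = label v) →
      (∀ v, (∀ i, ¬ c i ≤ v) → π v = v) → π = Equiv.refl P

lemma coverCodesAtMostTwice_nodeData (htree : IsTreeOrder P)
    (hlt : ∀ a b, E a b → a < b) (hcov : ∀ a b : P, a ⋖ b → E a b) {label : P → β}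
    (h2 : IsTwoReduced E label) : CoverCodesAtMostTwice (nodeData E label) := by
  classical
  intro h x hx k
  by_contra! h3
  rw [Multiset.count_map] at h3
  set S := (covers x).filter (fun d => k = code (nodeData E label) h d)
  have hS : 3 ≤ S.card := h3
  obtain ⟨c⟩ : Nonempty (Fin 3 ↪ S) :=
    Function.Embedding.nonempty_of_card_le (by rwa [Fintype.card_fin, Fintype.card_coe])
  let c' : Fin 3 → P := fun i => c i
  have hc' : Injective c' := Subtype.val_injective.comp c.injective
  have hc (i) : x ⋖ c' i ∧ k = code (nodeData E label) h (c' i) := by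
    simpa using Finset.mem_filter.1 (c i).2
  obtain ⟨φ, hφ⟩ := exists_isIciIso_of_code_eq htree h (coheight_le_of_lt (hc 0).1.lt hx)
    (coheight_le_of_lt (hc 1).1.lt hx) ((hc 0).2.symm.trans (hc 1).2)
  obtain ⟨π, hdata, hfix, hne⟩ :=
    exists_orderIso_swap htree (hc 0).1 (hc 1).1 (hc'.ne (by decide)) hφ
  refine hne (DFunLike.congr_fun (h2 x c' (fun i => hcov _ _ (hc i).1) hc' π.toEquiv
    (fun a b => (edge_map_iff htree hlt π fun v => congrArg Prod.snd (hdata v)).symm)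
    (fun v => congrArg Prod.fst (hdata v)) fun v hv => hfix v (hv 0) (hv 1)) _)

end Edges

section Reachability

variable {E : P → P → Prop}

/-- A refinement of `p` into covering steps is a path of edges. -/
lemma length_le_of_forall_path [Finite P] (hcov : ∀ a b : P, a ⋖ b → E a b) {N : ℕ}
    (hN : ∀ (n : ℕ) (f : ℕ → P), (∀ i < n, E (f i) (f (i + 1))) → n ≤ N) (p : LTSeries P) :
    p.length ≤ N := by
  obtain ⟨t, i, -⟩ := p.exists_relSeries_covBy
  have hpt : p.length ≤ t.length := by simpa using Fintype.card_le_of_embedding i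
  refine hpt.trans (hN t.length (fun j => t ⟨min j t.length, by omega⟩) fun j hj => hcov _ _ ?_)
  have := t.step ⟨j, hj⟩
  simpa [Nat.min_eq_left hj.le, Nat.min_eq_left hj] using this

lemma lt_of_edge (hle : ∀ a b : P, a ≤ b ↔ Relation.ReflTransGen E a b)
    (hE : ∀ v, ¬ Relation.TransGen E v v) (h : E a b) : a < b :=
  lt_of_le_of_ne ((hle a b).2 (.single h)) fun hab => by
    subst hab
    exact hE a (.single h)

lemma edge_of_covBy (hle : ∀ a b : P, a ≤ b ↔ Relation.ReflTransGen E a b)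
    (hE : ∀ v, ¬ Relation.TransGen E v v) (h : a ⋖ b) : E a b := by
  have hab := Relation.reflTransGen_iff_eq_or_transGen.1 ((hle a b).1 h.le)
  obtain ⟨z, haz, hzb⟩ := Relation.TransGen.head'_iff.1 (hab.resolve_left h.lt.ne')
  rcases h.eq_or_eq (lt_of_edge hle hE haz).le ((hle z b).2 hzb) with rfl | rfl
  · exact absurd (.single haz) (hE z)
  · exact haz

end Reachability

theorem card_le_of_isTwoReduced [Fintype P] {F : Type*} [DecidableEq F] {E : P → P → Prop}
    (hle : ∀ a b : P, a ≤ b ↔ Relation.ReflTransGen E a b) (hE : ∀ v, ¬ Relation.TransGen E v v)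
    (htree : IsTreeOrder P) {Ω : Finset F} {label : P → Multiset F}
    (hΩ : ∀ v A, A ∈ label v → A ∈ Ω) (hcount : ∀ v A, (label v).count A ≤ 2)
    (h2 : IsTwoReduced E label) {N : ℕ}
    (hN : ∀ (n : ℕ) (f : ℕ → P), (∀ i < n, E (f i) (f (i + 1))) → n ≤ N) {r : P}
    (hr : ∀ v, r ≤ v) : Fintype.card P ≤ sizeBound (4 ^ Ω.card * 2 ^ (N + 1)) N := by
  classical
  have hlen := length_le_of_forall_path (fun _ _ => edge_of_covBy hle hE) hN
  set A := twoMultisets Ω ×ˢ ((Finset.range (N + 1)).image (Nat.cast : ℕ → ℕ∞)).powerset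
  have hA (v) : nodeData E label v ∈ A := Finset.mem_product.2
    ⟨mem_twoMultisets (hΩ v) (hcount v), Finset.mem_powerset.2 (parentHeights_subset hlen v)⟩
  have hAk : A.card ≤ 4 ^ Ω.card * 2 ^ (N + 1) := by
    rw [Finset.card_product, Finset.card_powerset]
    exact Nat.mul_le_mul (card_twoMultisets_le Ω)
      (Nat.pow_le_pow_right two_pos (Finset.card_image_le.trans (Finset.card_range _).le))
  have hmult := coverCodesAtMostTwice_nodeData htree (fun _ _ => lt_of_edge hle hE)
    (fun _ _ => edge_of_covBy hle hE) h2
  calc Fintype.card P = (Finset.univ.filter (r ≤ ·)).card := by simp [hr]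
    _ ≤ _ := card_filter_le_sizeBound hA hAk hmult N r
      (coheight_le_iff.2 fun p _ => by exact_mod_cast hlen p)

abbrev reachOrder {V : Type*} (E : V → V → Prop) (hE : ∀ v, ¬ Relation.TransGen E v v) :
    PartialOrder V where
  le := Relation.ReflTransGen E
  le_refl _ := .refl
  le_trans _ _ _ := .trans
  le_antisymm a b hab hba := by
    rcases Relation.reflTransGen_iff_eq_or_transGen.1 hab with h | h
    · exact h.symm
    · exact absurd (h.trans_left hba) (hE a)

end LrDAG

/-- For a finite set `Ω` of formulas, any 2-reduced lrDAG satisfying the separation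
property (S), of height at most `N`, whose node labels are multisets over `Ω` in which
no formula occurs more than twice, has a number of nodes bounded by a function of `N`
and `|Ω|` only. -/
theorem two_reduced_lrDAG_card_bound :
    ∃ B : ℕ → ℕ → ℕ,
      ∀ (F : Type) [DecidableEq F] (V : Type) [Fintype V]
        (Ω : Finset F) (N : ℕ)
        (E : V → V → Prop) (label : V → Multiset F) (root : V),
        -- lrDAG: rooted and no directed cycles
        (∀ v, Relation.ReflTransGen E root v) →
        (∀ v, ¬ Relation.TransGen E v v) →
        -- height at most N
        (∀ (n : ℕ) (f : ℕ → V), (∀ i < n, E (f i) (f (i + 1))) → n ≤ N) →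
        -- labels are multisets over Ω with no formula occurring more than twice
        (∀ v A, A ∈ label v → A ∈ Ω) →
        (∀ v A, (label v).count A ≤ 2) →
        -- separation property (S)
        (∀ x y : V, ¬ Relation.ReflTransGen E x y → ¬ Relation.ReflTransGen E y x →
          ∀ v, ¬ (Relation.ReflTransGen E x v ∧ Relation.ReflTransGen E y v)) →
        -- 2-reduced: no node has three distinct children witnessing a non-trivial
        -- label-preserving automorphism fixing everything outside their upward closures
        (∀ (x : V) (c : Fin 3 → V), (∀ i, E x (c i)) → Function.Injective c →
          ∀ π : V ≃ V, (∀ a b, E a b ↔ E (π a) (π b)) →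
            (∀ v, label (π v) = label v) →
            (∀ v, (∀ i, ¬ Relation.ReflTransGen E (c i) v) → π v = v) →
            π = Equiv.refl V) →
        Fintype.card V ≤ B N Ω.card := by
  refine ⟨fun N k => LrDAG.sizeBound (4 ^ k * 2 ^ (N + 1)) N, ?_⟩
  intro F _ V _ Ω N E label root hroot hE hN hΩ hcount hS h2
  let _ := LrDAG.reachOrder E hE
  have htree : LrDAG.IsTreeOrder V := fun v a ha b hb _ => by
    by_contra h
    exact hS a b (h ∘ Or.inl) (h ∘ Or.inr) v ⟨ha, hb⟩
  exact LrDAG.card_le_of_isTwoReduced (fun _ _ => Iff.rfl) hE htree hΩ hcount h2 hN hroot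
end
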